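/- Let μ1, μ2, μ3, μ4 be nonzero real numbers and let θ2 ∈ ℝ be such that the four angles 0, θ2, 2θ2, 3θ2 are pairwise distinct modulo 2π. If (0, θ2, 2θ2, 3θ2) is a critical point of V, then (μ2 − μ4)·p1(μ2, μ3, μ4) = 0, where p1(μ2, μ3, μ4) = 4μ2⁵ + 2μ2³μ3² + 10μ2²μ3³ − 22μ2μ3⁴ + 8μ3⁵ − 24μ2⁴μ4 − 30μ2³μ3μ4 + 82μ2²μ3²μ4 − 60μ2μ3³μ4 + 22μ3⁴μ4 + 13μ2³μ4² + 135μ2²μ3μ4² − 181μ2μ3²μ4² + 54μ3³μ4² + 112μ2²μ4³ − 247μ2μ3μ4³ + 117μ3²μ4³ − 106μ2μ4⁴ + 98μ3μ4⁴ + 17μ4⁵. -/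

import Mathlib

/-!
The pair potential `g d = cos d + log (2 - 2 cos d) / 2` (`pairPotential`) has derivative `-F d`,
`F d = sin d (1 - 2 cos d) / (2 - 2 cos d)` (`pairForce`), so `∂V/∂θ_k = μ_k ∑_l μ_l F (θ_k - θ_l)`.
At `(0, t, 2t, 3t)` criticality gives four linear relations between `F t`, `F (2t)`, `F (3t)`.
Multiplying by `2 (1 - x) (1 + x) (1 + 2x) / sin t`, `x = cos t`, turns them into four equations
polynomial in `x` and linear in `μ`. Eliminating `μ2, μ3, μ4` from the last three leaves
`μ1 x (1 + 2x) Q(x) = 0` with `Q = 16x⁵ + 8x⁴ - 8x³ + 2x² - x - 4`. If `x = 0` the third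
equation reads `μ2 = μ4`; otherwise `Q(x) = 0`, and `p1` is the resultant in `x` of `Q` and
the first equation.
-/

open Real Polynomial

/-- The potential `V` for the (1+4)-vortex problem with circulation
parameters `μ` and angular positions `θ`. -/
noncomputable def V (μ θ : Fin 4 → ℝ) : ℝ :=
  -∑ i : Fin 4, ∑ j ∈ Finset.Ioi i,
      μ i * μ j *
        (Real.cos (θ i - θ j) + (1 / 2) * Real.log (2 - 2 * Real.cos (θ i - θ j)))

/-- The partial derivative `∂V/∂θ_k` at the point `θ`. -/
noncomputable def partialV (μ θ : Fin 4 → ℝ) (k : Fin 4) : ℝ :=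
  deriv (fun t => V μ (Function.update θ k t)) (θ k)

/-- `θ` is a critical point of `V`: all four partial derivatives vanish. -/
def IsCriticalPt (μ θ : Fin 4 → ℝ) : Prop :=
  ∀ k : Fin 4, partialV μ θ k = 0

/-- The Hessian matrix of `V` at `θ`, `H k l = ∂²V/∂θ_k ∂θ_l`. -/
noncomputable def hessV (μ θ : Fin 4 → ℝ) : Matrix (Fin 4) (Fin 4) ℝ :=
  fun k l => deriv (fun t => partialV μ (Function.update θ k t) l) (θ k)

noncomputable def pairPotential (d : ℝ) : ℝ :=
  cos d + 1 / 2 * log (2 - 2 * cos d)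

noncomputable def pairForce (d : ℝ) : ℝ :=
  sin d * (1 - 2 * cos d) / (2 - 2 * cos d)

lemma pairForce_neg (d : ℝ) : pairForce (-d) = -pairForce d := by
  simp [pairForce, neg_div]

@[simp] lemma pairForce_zero : pairForce 0 = 0 := by simp [pairForce]

lemma hasDerivAt_pairPotential {d : ℝ} (hd : cos d ≠ 1) :
    HasDerivAt pairPotential (-pairForce d) d := by
  have hne : 2 - 2 * cos d ≠ 0 := fun h => hd (by linarith)
  have hlog : HasDerivAt (fun d => log (2 - 2 * cos d)) (2 * sin d / (2 - 2 * cos d)) d := by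
    simpa using (((hasDerivAt_cos d).const_mul 2).const_sub 2).log hne
  refine ((hasDerivAt_cos d).add (hlog.const_mul (1 / 2))).congr_deriv ?_
  unfold pairForce
  field_simp
  ring

lemma hasDerivAt_pairPotential_update {ι : Type*} [DecidableEq ι] (θ : ι → ℝ) {i j k : ι}
    (hij : i ≠ j) (hθ : ∀ l ≠ k, cos (θ k - θ l) ≠ 1) :
    HasDerivAt (fun t => pairPotential (Function.update θ k t i - Function.update θ k t j))
      (-((if i = k then pairForce (θ k - θ j) else 0) +
        (if j = k then pairForce (θ k - θ i) else 0))) (θ k) := by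
  by_cases hik : i = k
  · subst hik
    have := (hasDerivAt_pairPotential (hθ j hij.symm)).comp (θ i)
      ((hasDerivAt_id _).sub_const (θ j))
    simpa [Function.comp_def, Function.update_apply, hij.symm] using this
  by_cases hjk : j = k
  · subst hjk
    have hc : cos (θ i - θ j) ≠ 1 := by rw [← cos_neg, neg_sub]; exact hθ i hik
    have := (hasDerivAt_pairPotential hc).comp (θ j) ((hasDerivAt_id _).const_sub (θ i))
    simpa [Function.comp_def, Function.update_apply, hik, ← pairForce_neg] using this
  · simpa [Function.update_apply, hik, hjk] using
      hasDerivAt_const (θ k) (pairPotential (θ i - θ j))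

lemma partialV_eq (μ θ : Fin 4 → ℝ) (k : Fin 4) (hθ : ∀ l ≠ k, cos (θ k - θ l) ≠ 1) :
    partialV μ θ k = μ k * ∑ l, μ l * pairForce (θ k - θ l) := by
  have hV : ∀ θ', V μ θ' =
      -∑ i : Fin 4, ∑ j ∈ Finset.Ioi i, μ i * μ j * pairPotential (θ' i - θ' j) :=
    fun _ => rfl
  have hderiv := (HasDerivAt.fun_sum (u := Finset.univ) fun i _ =>
    HasDerivAt.fun_sum (u := Finset.Ioi i) fun j hj =>
      (hasDerivAt_pairPotential_update θ (Finset.mem_Ioi.mp hj).ne hθ).const_mul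
        (μ i * μ j)).fun_neg
  rw [partialV, funext fun t => hV (Function.update θ k t), hderiv.deriv]
  fin_cases k <;> simp [Fin.sum_univ_four, Finset.sum_filter, ← Finset.filter_lt_eq_Ioi] <;> ring

lemma cos_sub_ne_one {ι : Type*} {θ : ι → ℝ} (hθ : ∀ i j, i ≠ j → ∀ n : ℤ, θ i - θ j ≠ 2 * π * n)
    {i j : ι} (hij : i ≠ j) : cos (θ i - θ j) ≠ 1 := by
  rw [Ne, cos_eq_one_iff]
  rintro ⟨n, hn⟩
  exact hθ i j hij n (by rw [← hn]; ring)

def equallySpaced (t : ℝ) : Fin 4 → ℝ := ![0, t, 2 * t, 3 * t]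

lemma equallySpaced_sub (t : ℝ) (k l : Fin 4) :
    equallySpaced t k - equallySpaced t l = ((k : ℕ) - (l : ℕ) : ℝ) * t := by
  fin_cases k <;> fin_cases l <;> norm_num [equallySpaced] <;> ring

lemma pairForce_relations_of_isCriticalPt {μ1 μ2 μ3 μ4 t : ℝ}
    (h1 : μ1 ≠ 0) (h2 : μ2 ≠ 0) (h3 : μ3 ≠ 0) (h4 : μ4 ≠ 0)
    (hcos : ∀ i j, i ≠ j → cos (equallySpaced t i - equallySpaced t j) ≠ 1)
    (hcrit : IsCriticalPt ![μ1, μ2, μ3, μ4] (equallySpaced t)) :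
    μ2 * pairForce t + μ3 * pairForce (2 * t) + μ4 * pairForce (3 * t) = 0 ∧
    (μ1 - μ3) * pairForce t - μ4 * pairForce (2 * t) = 0 ∧
    (μ2 - μ4) * pairForce t + μ1 * pairForce (2 * t) = 0 ∧
    μ3 * pairForce t + μ2 * pairForce (2 * t) + μ1 * pairForce (3 * t) = 0 := by
  have hμ : ∀ k, (![μ1, μ2, μ3, μ4] : Fin 4 → ℝ) k ≠ 0 := by
    intro k; fin_cases k <;> assumption
  have balance (k : Fin 4) :
      ∑ l, ![μ1, μ2, μ3, μ4] l * pairForce (((k : ℕ) - (l : ℕ) : ℝ) * t) = 0 := by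
    have := (partialV_eq _ _ k fun l hl => hcos k l hl.symm).symm.trans (hcrit k)
    simpa [equallySpaced_sub, hμ k] using this
  have e0 := balance 0
  have e1 := balance 1
  have e2 := balance 2
  have e3 := balance 3
  norm_num [Fin.sum_univ_four, pairForce_neg, Matrix.cons_val_two, Matrix.cons_val_three]
    at e0 e1 e2 e3
  exact ⟨by linear_combination -e0, by linear_combination e1, by linear_combination e2,
    by linear_combination e3⟩

lemma sin_ne_zero_of_cos_two_mul_ne_one {t : ℝ} (h : cos (2 * t) ≠ 1) : sin t ≠ 0 := by
  intro hs
  rw [cos_two_mul, cos_sq', hs] at h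
  norm_num at h

lemma one_add_two_mul_cos_ne_zero {t : ℝ} (h : cos (3 * t) ≠ 1) : 1 + 2 * cos t ≠ 0 := by
  intro hc
  apply h
  rw [cos_three_mul, show cos t = -1 / 2 by linarith]
  norm_num

lemma pairForce_mul_eq {t : ℝ} (h : cos t ≠ 1) :
    2 * (1 - cos t) * pairForce t = sin t * (1 - 2 * cos t) := by
  have : 2 - 2 * cos t ≠ 0 := fun h' => h (by linarith)
  unfold pairForce
  field_simp

lemma pairForce_two_mul_eq {t : ℝ} (h : cos (2 * t) ≠ 1) :
    2 * (1 - cos t ^ 2) * pairForce (2 * t) = sin t * (cos t * (3 - 4 * cos t ^ 2)) := by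
  have hF := pairForce_mul_eq h
  rw [cos_two_mul, sin_two_mul] at hF
  linear_combination hF / 2

lemma pairForce_three_mul_eq {t : ℝ} (h : cos (3 * t) ≠ 1) :
    2 * (1 - cos t) * (1 + 2 * cos t) * pairForce (3 * t) =
      sin t * ((2 * cos t - 1) * (1 + 6 * cos t - 8 * cos t ^ 3)) := by
  have hF := pairForce_mul_eq h
  rw [cos_three_mul, sin_three_mul] at hF
  have hprod : (1 + 2 * cos t) * (2 * (1 - cos t) * (1 + 2 * cos t) * pairForce (3 * t) -
      sin t * ((2 * cos t - 1) * (1 + 6 * cos t - 8 * cos t ^ 3))) = 0 := by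
    linear_combination hF - 4 * sin t * (1 + 6 * cos t - 8 * cos t ^ 3) * sin_sq_add_cos_sq t
  exact sub_eq_zero.mp ((mul_eq_zero.mp hprod).resolve_left (one_add_two_mul_cos_ne_zero h))

-- With `x = cos t`: `2 (1 - x) (1 + x) (1 + 2x) * pairForce (n * t) = sin t * forcePolyₙ x`.
def forcePoly₁ (x : ℝ) : ℝ := (1 + x) * (1 - 4 * x ^ 2)

def forcePoly₂ (x : ℝ) : ℝ := x * (3 - 4 * x ^ 2) * (1 + 2 * x)

def forcePoly₃ (x : ℝ) : ℝ := (1 + x) * (2 * x - 1) * (1 + 6 * x - 8 * x ^ 3)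

lemma forcePoly_eq_zero_of_pairForce_eq_zero {t α β γ : ℝ}
    (h1 : cos t ≠ 1) (h2 : cos (2 * t) ≠ 1) (h3 : cos (3 * t) ≠ 1)
    (h : α * pairForce t + β * pairForce (2 * t) + γ * pairForce (3 * t) = 0) :
    α * forcePoly₁ (cos t) + β * forcePoly₂ (cos t) + γ * forcePoly₃ (cos t) = 0 := by
  have hsin : sin t *
      (α * forcePoly₁ (cos t) + β * forcePoly₂ (cos t) + γ * forcePoly₃ (cos t)) = 0 := by
    unfold forcePoly₁ forcePoly₂ forcePoly₃
    linear_combination 2 * (1 - cos t) * (1 + cos t) * (1 + 2 * cos t) * h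
      - α * (1 + cos t) * (1 + 2 * cos t) * pairForce_mul_eq h1
      - β * (1 + 2 * cos t) * pairForce_two_mul_eq h2
      - γ * (1 + cos t) * pairForce_three_mul_eq h3
  exact (mul_eq_zero.mp hsin).resolve_left (sin_ne_zero_of_cos_two_mul_ne_one h2)

lemma forcePoly_relations_of_isCriticalPt {μ1 μ2 μ3 μ4 t : ℝ}
    (h1 : μ1 ≠ 0) (h2 : μ2 ≠ 0) (h3 : μ3 ≠ 0) (h4 : μ4 ≠ 0)
    (hcos : ∀ i j, i ≠ j → cos (equallySpaced t i - equallySpaced t j) ≠ 1)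
    (hcrit : IsCriticalPt ![μ1, μ2, μ3, μ4] (equallySpaced t)) :
    μ2 * forcePoly₁ (cos t) + μ3 * forcePoly₂ (cos t) + μ4 * forcePoly₃ (cos t) = 0 ∧
    (μ1 - μ3) * forcePoly₁ (cos t) - μ4 * forcePoly₂ (cos t) = 0 ∧
    (μ2 - μ4) * forcePoly₁ (cos t) + μ1 * forcePoly₂ (cos t) = 0 ∧
    μ3 * forcePoly₁ (cos t) + μ2 * forcePoly₂ (cos t) + μ1 * forcePoly₃ (cos t) = 0 := by
  have hc1 : cos t ≠ 1 := by simpa [equallySpaced] using hcos 1 0 (by decide)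
  have hc2 : cos (2 * t) ≠ 1 := by simpa [equallySpaced] using hcos 2 0 (by decide)
  have hc3 : cos (3 * t) ≠ 1 := by simpa [equallySpaced] using hcos 3 0 (by decide)
  obtain ⟨e1, e2, e3, e4⟩ := pairForce_relations_of_isCriticalPt h1 h2 h3 h4 hcos hcrit
  have p2 := forcePoly_eq_zero_of_pairForce_eq_zero (α := μ1 - μ3) (β := -μ4) (γ := 0)
    hc1 hc2 hc3 (by linear_combination e2)
  have p3 := forcePoly_eq_zero_of_pairForce_eq_zero (α := μ2 - μ4) (β := μ1) (γ := 0)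
    hc1 hc2 hc3 (by linear_combination e3)
  exact ⟨forcePoly_eq_zero_of_pairForce_eq_zero hc1 hc2 hc3 e1, by linear_combination p2,
    by linear_combination p3, forcePoly_eq_zero_of_pairForce_eq_zero hc1 hc2 hc3 e4⟩

lemma quintic_eq_zero_of_forcePoly_relations {μ1 μ2 μ3 μ4 x : ℝ}
    (hμ1 : μ1 ≠ 0) (hx : x ≠ 0) (hx' : 1 + 2 * x ≠ 0)
    (h2 : (μ1 - μ3) * forcePoly₁ x - μ4 * forcePoly₂ x = 0)
    (h3 : (μ2 - μ4) * forcePoly₁ x + μ1 * forcePoly₂ x = 0)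
    (h4 : μ3 * forcePoly₁ x + μ2 * forcePoly₂ x + μ1 * forcePoly₃ x = 0) :
    16 * x ^ 5 + 8 * x ^ 4 - 8 * x ^ 3 + 2 * x ^ 2 - x - 4 = 0 := by
  have h :
      μ1 * x * (1 + 2 * x) * (16 * x ^ 5 + 8 * x ^ 4 - 8 * x ^ 3 + 2 * x ^ 2 - x - 4) = 0 := by
    simp only [forcePoly₁, forcePoly₂, forcePoly₃] at h2 h3 h4
    linear_combination (1 + x) * (1 - 4 * x ^ 2) * h2 - x * (3 - 4 * x ^ 2) * (1 + 2 * x) * h3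
      + (1 + x) * (1 - 4 * x ^ 2) * h4
  simpa [hμ1, hx, hx'] using h

lemma p1_eq_zero_of_quintic {μ2 μ3 μ4 x : ℝ}
    (hQ : 16 * x ^ 5 + 8 * x ^ 4 - 8 * x ^ 3 + 2 * x ^ 2 - x - 4 = 0)
    (hL : μ2 * forcePoly₁ x + μ3 * forcePoly₂ x + μ4 * forcePoly₃ x = 0) :
    4 * μ2 ^ 5 + 2 * μ2 ^ 3 * μ3 ^ 2 + 10 * μ2 ^ 2 * μ3 ^ 3 - 22 * μ2 * μ3 ^ 4 +
        8 * μ3 ^ 5 - 24 * μ2 ^ 4 * μ4 - 30 * μ2 ^ 3 * μ3 * μ4 +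
        82 * μ2 ^ 2 * μ3 ^ 2 * μ4 - 60 * μ2 * μ3 ^ 3 * μ4 + 22 * μ3 ^ 4 * μ4 +
        13 * μ2 ^ 3 * μ4 ^ 2 + 135 * μ2 ^ 2 * μ3 * μ4 ^ 2 -
        181 * μ2 * μ3 ^ 2 * μ4 ^ 2 + 54 * μ3 ^ 3 * μ4 ^ 2 + 112 * μ2 ^ 2 * μ4 ^ 3 -
        247 * μ2 * μ3 * μ4 ^ 3 + 117 * μ3 ^ 2 * μ4 ^ 3 - 106 * μ2 * μ4 ^ 4 +
        98 * μ3 * μ4 ^ 4 + 17 * μ4 ^ 5 = 0 := by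
  unfold forcePoly₁ forcePoly₂ forcePoly₃ at hL
  -- Bézout cofactors of the resultant of `hQ` and `hL` with respect to `x`
  linear_combination (
      (-2 * μ2 ^ 5 - 16 * μ2 ^ 4 * μ3 - μ2 ^ 4 * μ4 + 12 * μ2 ^ 3 * μ3 ^ 2 + 169 * μ2 ^ 3 * μ3 * μ4
      + 113 * μ2 ^ 3 * μ4 ^ 2 - 50 * μ2 ^ 2 * μ3 ^ 3 - 143 * μ2 ^ 2 * μ3 ^ 2 * μ4
      - 544 * μ2 ^ 2 * μ3 * μ4 ^ 2 - 420 * μ2 ^ 2 * μ4 ^ 3 + 32 * μ2 * μ3 ^ 4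
      + 120 * μ2 * μ3 ^ 3 * μ4 + 298 * μ2 * μ3 ^ 2 * μ4 ^ 2 + 705 * μ2 * μ3 * μ4 ^ 3
      + 449 * μ2 * μ4 ^ 4 - 4 * μ3 ^ 5 - 32 * μ3 ^ 4 * μ4 - 72 * μ3 ^ 3 * μ4 ^ 2
      - 177 * μ3 ^ 2 * μ4 ^ 3 - 292 * μ3 * μ4 ^ 4 - 147 * μ4 ^ 5)
      + (2 * μ2 ^ 5 + 2 * μ2 ^ 4 * μ3 - 11 * μ2 ^ 4 * μ4 - 48 * μ2 ^ 3 * μ3 ^ 2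
      - 10 * μ2 ^ 3 * μ3 * μ4 + 53 * μ2 ^ 3 * μ4 ^ 2 + 50 * μ2 ^ 2 * μ3 ^ 3
      + 394 * μ2 ^ 2 * μ3 ^ 2 * μ4 - 112 * μ2 ^ 2 * μ3 * μ4 ^ 2 - 348 * μ2 ^ 2 * μ4 ^ 3
      - 142 * μ2 * μ3 ^ 4 - 117 * μ2 * μ3 ^ 3 * μ4 - 731 * μ2 * μ3 ^ 2 * μ4 ^ 2
      + 419 * μ2 * μ3 * μ4 ^ 3 + 919 * μ2 * μ4 ^ 4 + 64 * μ3 ^ 5 + 58 * μ3 ^ 4 * μ4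
      + 195 * μ3 ^ 3 * μ4 ^ 2 + 297 * μ3 ^ 2 * μ4 ^ 3 - 487 * μ3 * μ4 ^ 4 - 511 * μ4 ^ 5) * x
      + (-4 * μ2 ^ 5 + 64 * μ2 ^ 4 * μ3 + 70 * μ2 ^ 4 * μ4 - 96 * μ2 ^ 3 * μ3 ^ 2
      - 754 * μ2 ^ 3 * μ3 * μ4 - 566 * μ2 ^ 3 * μ4 ^ 2 + 204 * μ2 ^ 2 * μ3 ^ 3
      + 782 * μ2 ^ 2 * μ3 ^ 2 * μ4 + 3228 * μ2 ^ 2 * μ3 * μ4 ^ 2 + 2200 * μ2 ^ 2 * μ4 ^ 3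
      - 176 * μ2 * μ3 ^ 4 - 916 * μ2 * μ3 ^ 3 * μ4 - 2284 * μ2 * μ3 ^ 2 * μ4 ^ 2
      - 5650 * μ2 * μ3 * μ4 ^ 3 - 3686 * μ2 * μ4 ^ 4 + 48 * μ3 ^ 5 + 352 * μ3 ^ 4 * μ4
      + 832 * μ3 ^ 3 * μ4 ^ 2 + 2006 * μ3 ^ 2 * μ4 ^ 3 + 3312 * μ3 * μ4 ^ 4 + 1762 * μ4 ^ 5) * x ^ 2
      + (-8 * μ2 ^ 4 * μ3 + 16 * μ2 ^ 4 * μ4 + 112 * μ2 ^ 3 * μ3 ^ 2 + 68 * μ2 ^ 3 * μ3 * μ4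
      - 184 * μ2 ^ 3 * μ4 ^ 2 - 112 * μ2 ^ 2 * μ3 ^ 3 - 796 * μ2 ^ 2 * μ3 ^ 2 * μ4
      - 168 * μ2 ^ 2 * μ3 * μ4 ^ 2 + 720 * μ2 ^ 2 * μ4 ^ 3 + 296 * μ2 * μ3 ^ 4
      + 340 * μ2 * μ3 ^ 3 * μ4 + 1788 * μ2 * μ3 ^ 2 * μ4 ^ 2 + 88 * μ2 * μ3 * μ4 ^ 3
      - 1104 * μ2 * μ4 ^ 4 - 128 * μ3 ^ 5 - 184 * μ3 ^ 4 * μ4 - 548 * μ3 ^ 3 * μ4 ^ 2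
      - 992 * μ3 ^ 2 * μ4 ^ 3 + 148 * μ3 * μ4 ^ 4 + 472 * μ4 ^ 5) * x ^ 3
      + (-16 * μ2 ^ 4 * μ4 + 224 * μ2 ^ 3 * μ3 * μ4 + 296 * μ2 ^ 3 * μ4 ^ 2
      - 224 * μ2 ^ 2 * μ3 ^ 2 * μ4 - 1816 * μ2 ^ 2 * μ3 * μ4 ^ 2 - 1632 * μ2 ^ 2 * μ4 ^ 3
      + 592 * μ2 * μ3 ^ 3 * μ4 + 1128 * μ2 * μ3 ^ 2 * μ4 ^ 2 + 4424 * μ2 * μ3 * μ4 ^ 3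
      + 3264 * μ2 * μ4 ^ 4 - 256 * μ3 ^ 4 * μ4 - 560 * μ3 ^ 3 * μ4 ^ 2 - 1480 * μ3 ^ 2 * μ4 ^ 3
      - 3024 * μ3 * μ4 ^ 4 - 1688 * μ4 ^ 5) * x ^ 4
    ) * hQ / 2 + (
      (-64 * μ2 ^ 3 * μ3 - 52 * μ2 ^ 3 * μ4 + 52 * μ2 ^ 2 * μ3 ^ 2 + 552 * μ2 ^ 2 * μ3 * μ4
      + 426 * μ2 ^ 2 * μ4 ^ 2 - 180 * μ2 * μ3 ^ 3 - 356 * μ2 * μ3 ^ 2 * μ4 - 1354 * μ2 * μ3 * μ4 ^ 2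
      - 1030 * μ2 * μ4 ^ 3 + 84 * μ3 ^ 4 + 180 * μ3 ^ 3 * μ4 + 474 * μ3 ^ 2 * μ4 ^ 2
      + 972 * μ3 * μ4 ^ 3 + 554 * μ4 ^ 4)
      + (6 * μ2 ^ 4 + 56 * μ2 ^ 3 * μ3 + 13 * μ2 ^ 3 * μ4 - 40 * μ2 ^ 2 * μ3 ^ 2
      - 531 * μ2 ^ 2 * μ3 * μ4 - 348 * μ2 ^ 2 * μ4 ^ 2 + 174 * μ2 * μ3 ^ 3 + 353 * μ2 * μ3 ^ 2 * μ4
      + 1313 * μ2 * μ3 * μ4 ^ 2 + 1000 * μ2 * μ4 ^ 3 - 80 * μ3 ^ 4 - 186 * μ3 ^ 3 * μ4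
      - 465 * μ3 ^ 2 * μ4 ^ 2 - 958 * μ3 * μ4 ^ 3 - 579 * μ4 ^ 4) * x
      + (-16 * μ2 ^ 4 - 40 * μ2 ^ 3 * μ3 + 64 * μ2 ^ 3 * μ4 + 8 * μ2 ^ 2 * μ3 ^ 2
      + 400 * μ2 ^ 2 * μ3 * μ4 + 160 * μ2 ^ 2 * μ4 ^ 2 - 120 * μ2 * μ3 ^ 3 - 296 * μ2 * μ3 ^ 2 * μ4
      - 1024 * μ2 * μ3 * μ4 ^ 2 - 816 * μ2 * μ4 ^ 3 + 64 * μ3 ^ 4 + 152 * μ3 ^ 3 * μ4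
      + 400 * μ3 ^ 2 * μ4 ^ 2 + 808 * μ3 * μ4 ^ 3 + 496 * μ4 ^ 4) * x ^ 2
      + (16 * μ2 ^ 4 - 80 * μ2 ^ 3 * μ3 - 184 * μ2 ^ 3 * μ4 + 112 * μ2 ^ 2 * μ3 ^ 2
      + 648 * μ2 ^ 2 * μ3 * μ4 + 720 * μ2 ^ 2 * μ4 ^ 2 - 224 * μ2 * μ3 ^ 3 - 424 * μ2 * μ3 ^ 2 * μ4
      - 1544 * μ2 * μ3 * μ4 ^ 2 - 1104 * μ2 * μ4 ^ 3 + 96 * μ3 ^ 4 + 192 * μ3 ^ 3 * μ4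
      + 520 * μ3 ^ 2 * μ4 ^ 2 + 992 * μ3 * μ4 ^ 3 + 472 * μ4 ^ 4) * x ^ 3
      + (-16 * μ2 ^ 4 + 224 * μ2 ^ 3 * μ3 + 296 * μ2 ^ 3 * μ4 - 224 * μ2 ^ 2 * μ3 ^ 2
      - 1816 * μ2 ^ 2 * μ3 * μ4 - 1632 * μ2 ^ 2 * μ4 ^ 2 + 592 * μ2 * μ3 ^ 3
      + 1128 * μ2 * μ3 ^ 2 * μ4 + 4424 * μ2 * μ3 * μ4 ^ 2 + 3264 * μ2 * μ4 ^ 3 - 256 * μ3 ^ 4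
      - 560 * μ3 ^ 3 * μ4 - 1480 * μ3 ^ 2 * μ4 ^ 2 - 3024 * μ3 * μ4 ^ 3 - 1688 * μ4 ^ 4) * x ^ 4
    ) * hL / 2

/-- Equally spaced configurations: the relation `(mu2 - mu4) * p1 = 0` must
hold, where `p1` is the quintic factor of `f6`. -/
theorem trapezoid_f6 (μ1 μ2 μ3 μ4 θ2 : ℝ)
    (h1 : μ1 ≠ 0) (h2 : μ2 ≠ 0) (h3 : μ3 ≠ 0) (h4 : μ4 ≠ 0)
    (hdist : ∀ i j : Fin 4, i ≠ j → ∀ n : ℤ,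
      (![0, θ2, 2 * θ2, 3 * θ2] : Fin 4 → ℝ) i -
        (![0, θ2, 2 * θ2, 3 * θ2] : Fin 4 → ℝ) j ≠ 2 * π * n)
    (hcrit : IsCriticalPt ![μ1, μ2, μ3, μ4] ![0, θ2, 2 * θ2, 3 * θ2]) :
    (μ2 - μ4) *
      (4 * μ2 ^ 5 + 2 * μ2 ^ 3 * μ3 ^ 2 + 10 * μ2 ^ 2 * μ3 ^ 3 - 22 * μ2 * μ3 ^ 4 +
        8 * μ3 ^ 5 - 24 * μ2 ^ 4 * μ4 - 30 * μ2 ^ 3 * μ3 * μ4 +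
        82 * μ2 ^ 2 * μ3 ^ 2 * μ4 - 60 * μ2 * μ3 ^ 3 * μ4 + 22 * μ3 ^ 4 * μ4 +
        13 * μ2 ^ 3 * μ4 ^ 2 + 135 * μ2 ^ 2 * μ3 * μ4 ^ 2 -
        181 * μ2 * μ3 ^ 2 * μ4 ^ 2 + 54 * μ3 ^ 3 * μ4 ^ 2 + 112 * μ2 ^ 2 * μ4 ^ 3 -
        247 * μ2 * μ3 * μ4 ^ 3 + 117 * μ3 ^ 2 * μ4 ^ 3 - 106 * μ2 * μ4 ^ 4 +
        98 * μ3 * μ4 ^ 4 + 17 * μ4 ^ 5) = 0 := by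
  have hcos : ∀ i j, i ≠ j → cos (equallySpaced θ2 i - equallySpaced θ2 j) ≠ 1 :=
    fun i j hij => cos_sub_ne_one hdist hij
  obtain ⟨hL, h2x, h3x, h4x⟩ := forcePoly_relations_of_isCriticalPt h1 h2 h3 h4 hcos hcrit
  rcases eq_or_ne (cos θ2) 0 with hx | hx
  · have hμ : μ2 - μ4 = 0 := by simpa [forcePoly₁, forcePoly₂, hx] using h3x
    rw [hμ, zero_mul]
  · have hx' : 1 + 2 * cos θ2 ≠ 0 :=
      one_add_two_mul_cos_ne_zero (by simpa [equallySpaced] using hcos 3 0 (by decide))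
    exact mul_eq_zero_of_right _
      (p1_eq_zero_of_quintic (quintic_eq_zero_of_forcePoly_relations h1 hx hx' h2x h3x h4x) hL)
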